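/- Let G be a locally compact group, f ∈ L¹(G) non-negative with ‖f‖₁ = 1, and let m be the pushforward of f dx under x ↦ (x, x⁻¹). Then for every y ∈ G, the measure (δ_y ⊗ δ_e) ∗ m equals the pushforward of (δ_y ∗ f) dx under x ↦ (x, x⁻¹ y), and m ∗ (δ_e ⊗ δ_y) equals the pushforward of f dx under x ↦ (x, x⁻¹ y). Consequently ‖(δ_y ⊗ δ_e) ∗ m − m ∗ (δ_e ⊗ δ_y)‖ ≤ ‖δ_y ∗ f − f‖₁. -/

import Mathlib

open MeasureTheory
open scoped MeasureTheory

/-- Convolution with a Dirac measure on the right is a right translation. -/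
lemma mconv_dirac_right_aux {M : Type*} [Monoid M] [MeasurableSpace M]
    [MeasurableSingletonClass M] [MeasurableMul M]
    (m : Measure M) [SFinite m] (a : M) :
    m ∗ₘ (Measure.dirac a) = Measure.map (fun x => x * a) m := by
  unfold Measure.mconv
  rw [Measure.prod_dirac]
  have hsnd : ∀ᵐ p ∂(Measure.map (fun x : M => (x, a)) m), p.2 ∈ ({a} : Set M) := by
    rw [MeasureTheory.ae_map_iff measurable_prodMk_right.aemeasurable
      (measurable_snd (measurableSet_singleton a))]
    exact Filter.Eventually.of_forall fun x => rfl
  have hcongr : (fun p : M × M => p.1 * p.2)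
      =ᵐ[Measure.map (fun x : M => (x, a)) m] (fun p : M × M => p.1 * a) :=
    hsnd.mono fun p hp => by
      rw [Set.mem_singleton_iff] at hp; simp [hp]
  rw [Measure.map_congr hcongr,
    Measure.map_map (measurable_fst.mul_const a) measurable_prodMk_right]
  rfl

/-- Convolution with a Dirac measure on the left is a left translation. -/
lemma mconv_dirac_left_aux {M : Type*} [Monoid M] [MeasurableSpace M]
    [MeasurableSingletonClass M] [MeasurableMul M]
    (m : Measure M) [SFinite m] (a : M) :
    (Measure.dirac a) ∗ₘ m = Measure.map (fun x => a * x) m := by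
  unfold Measure.mconv
  rw [Measure.dirac_prod]
  have hfst : ∀ᵐ p ∂(Measure.map (Prod.mk a) m), p.1 ∈ ({a} : Set M) := by
    rw [MeasureTheory.ae_map_iff measurable_prodMk_left.aemeasurable
      (measurable_fst (measurableSet_singleton a))]
    exact Filter.Eventually.of_forall fun x => rfl
  have hcongr : (fun p : M × M => p.1 * p.2)
      =ᵐ[Measure.map (Prod.mk a) m] (fun p : M × M => a * p.2) :=
    hfst.mono fun p hp => by
      rw [Set.mem_singleton_iff] at hp; simp [hp]
  rw [Measure.map_congr hcongr,
    Measure.map_map (measurable_snd.const_mul a) measurable_prodMk_left]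
  rfl

/-- The total variation of a signed measure on the whole space is bounded by a constant
bounding `s A - s Aᶜ` over all measurable sets `A`. -/
lemma tv_univ_le_aux {α : Type*} [MeasurableSpace α] (s : SignedMeasure α) (c : ℝ)
    (h : ∀ A : Set α, MeasurableSet A → s A - s Aᶜ ≤ c) :
    (s.totalVariation Set.univ).toReal ≤ c := by
  obtain ⟨i, hi₁, hi₂, hi₃, hpos, hneg⟩ := s.toJordanDecomposition_spec
  rw [SignedMeasure.totalVariation, Measure.add_apply, hpos, hneg,
    SignedMeasure.toMeasureOfZeroLE_apply _ hi₂ hi₁ MeasurableSet.univ,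
    SignedMeasure.toMeasureOfLEZero_apply _ hi₃ hi₁.compl MeasurableSet.univ,
    ← ENNReal.coe_add, ENNReal.coe_toReal, NNReal.coe_add, NNReal.coe_mk, NNReal.coe_mk,
    Set.inter_univ, Set.inter_univ]
  have := h i hi₁
  linarith

/-- With `m` the pushforward of `f dx` under `x ↦ (x, x⁻¹)`:
`(δ_y ⊗ δ_e) ∗ m` is the pushforward of `(δ_y ∗ f) dx` under `x ↦ (x, x⁻¹y)`,
`m ∗ (δ_e ⊗ δ_y)` is the pushforward of `f dx` under `x ↦ (x, x⁻¹y)`, and hence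
`‖(δ_y ⊗ δ_e) ∗ m − m ∗ (δ_e ⊗ δ_y)‖ ≤ ‖δ_y ∗ f − f‖₁`. -/
theorem conv_dirac_antidiagonal
    {G : Type*} [MeasurableSpace G] [TopologicalSpace G] [BorelSpace G]
    [Group G] [IsTopologicalGroup G] [LocallyCompactSpace G] [T2Space G]
    (μ : Measure G) [μ.IsHaarMeasure]
    (f : G → ℝ) (hf : Integrable f μ) (hf0 : ∀ x, 0 ≤ f x)
    (hf1 : ∫ x, f x ∂μ = 1) (y : G)
    (m : Measure (G × G))
    (hm : m = Measure.map (fun x => (x, x⁻¹))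
        (μ.withDensity fun x => ENNReal.ofReal (f x)))
    (hfin₁ : IsFiniteMeasure ((Measure.dirac ((y, 1) : G × G)) ∗ₘ m))
    (hfin₂ : IsFiniteMeasure (m ∗ₘ (Measure.dirac ((1, y) : G × G)))) :
    (Measure.dirac ((y, 1) : G × G)) ∗ₘ m =
      Measure.map (fun x => (x, x⁻¹ * y))
        (μ.withDensity fun x => ENNReal.ofReal (f (y⁻¹ * x))) ∧
    m ∗ₘ (Measure.dirac ((1, y) : G × G)) =
      Measure.map (fun x => (x, x⁻¹ * y))
        (μ.withDensity fun x => ENNReal.ofReal (f x)) ∧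
    (((((Measure.dirac ((y, 1) : G × G)) ∗ₘ m).toSignedMeasure -
        (m ∗ₘ (Measure.dirac ((1, y) : G × G))).toSignedMeasure).totalVariation)
          Set.univ).toReal ≤ ∫ x, |f (y⁻¹ * x) - f x| ∂μ := by
  have hf0' : 0 ≤ᵐ[μ] f := Filter.Eventually.of_forall hf0
  let ν : Measure G := μ.withDensity (fun x => ENNReal.ofReal (f x))
  have hν : ν = μ.withDensity (fun x => ENNReal.ofReal (f x)) := rfl
  have hT : Measurable (fun x : G => (x, x⁻¹)) := measurable_id.prodMk measurable_inv
  have hT' : Measurable (fun x : G => (x, x⁻¹ * y)) :=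
    measurable_id.prodMk (measurable_inv.mul_const y)
  have hνuniv : ν Set.univ = 1 := by
    rw [hν, withDensity_apply _ MeasurableSet.univ, Measure.restrict_univ,
      ← ofReal_integral_eq_lintegral_ofReal hf hf0', hf1, ENNReal.ofReal_one]
  haveI : IsFiniteMeasure ν := ⟨by rw [hνuniv]; exact ENNReal.one_lt_top⟩
  haveI : IsFiniteMeasure m :=
    ⟨by rw [hm, Measure.map_apply hT MeasurableSet.univ, Set.preimage_univ, hνuniv]
        exact ENNReal.one_lt_top⟩
  haveI : MeasurableMul (G × G) :=
    { measurable_const_mul := fun c =>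
        (measurable_fst.const_mul c.1).prodMk (measurable_snd.const_mul c.2)
      measurable_mul_const := fun c =>
        (measurable_fst.mul_const c.1).prodMk (measurable_snd.mul_const c.2) }
  -- translation of the density
  have key : μ.withDensity (fun x => ENNReal.ofReal (f (y⁻¹ * x)))
      = Measure.map (fun x => y * x) ν := by
    ext s hs
    rw [Measure.map_apply (measurable_const_mul y) hs, hν, withDensity_apply _ hs,
      withDensity_apply _ (measurable_const_mul y hs)]
    calc ∫⁻ x in s, ENNReal.ofReal (f (y⁻¹ * x)) ∂μ
        = ∫⁻ x in s, ENNReal.ofReal (f (y⁻¹ * x)) ∂(Measure.map (y * ·) μ) := by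
          rw [map_mul_left_eq_self μ y]
      _ = ∫⁻ x, ENNReal.ofReal (f (y⁻¹ * x))
            ∂(Measure.map (y * ·) (μ.restrict ((y * ·) ⁻¹' s))) := by
          rw [Measure.restrict_map (measurable_const_mul y) hs]
      _ = ∫⁻ x in (y * ·) ⁻¹' s, ENNReal.ofReal (f (y⁻¹ * (y * x))) ∂μ :=
          (MeasurableEquiv.mulLeft y).measurableEmbedding.lintegral_map _
      _ = ∫⁻ x in (fun x => y * x) ⁻¹' s, ENNReal.ofReal (f x) ∂μ := by
          simp [inv_mul_cancel_left]
  have h1 : (Measure.dirac ((y, 1) : G × G)) ∗ₘ m =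
      Measure.map (fun x => (x, x⁻¹ * y))
        (μ.withDensity fun x => ENNReal.ofReal (f (y⁻¹ * x))) := by
    rw [key, mconv_dirac_left_aux m ((y, 1) : G × G), hm,
      Measure.map_map (measurable_const_mul ((y, 1) : G × G)) hT,
      Measure.map_map hT' (measurable_const_mul y)]
    congr 1
    funext x
    simp [Prod.ext_iff, mul_inv_rev, mul_assoc]
  have h2 : m ∗ₘ (Measure.dirac ((1, y) : G × G)) =
      Measure.map (fun x => (x, x⁻¹ * y)) ν := by
    rw [mconv_dirac_right_aux m ((1, y) : G × G), hm,
      Measure.map_map (measurable_mul_const ((1, y) : G × G)) hT]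
    congr 1
    funext x
    simp [Prod.ext_iff]
  refine ⟨h1, h2, ?_⟩
  -- the total variation bound
  have hmp : MeasurePreserving (fun x : G => y⁻¹ * x) μ μ := measurePreserving_mul_left μ y⁻¹
  have hf₁ : Integrable (fun x => f (y⁻¹ * x)) μ :=
    (hmp.integrable_comp_emb (MeasurableEquiv.mulLeft y⁻¹).measurableEmbedding).2 hf
  have hf₁0' : 0 ≤ᵐ[μ] fun x => f (y⁻¹ * x) := Filter.Eventually.of_forall fun x => hf0 _
  rw [h1] at hfin₁
  rw [h2] at hfin₂
  haveI := hfin₁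
  haveI := hfin₂
  simp only [h1, h2]
  have hd : Integrable (fun x => |f (y⁻¹ * x) - f x|) μ := (hf₁.sub hf).abs
  -- evaluation of the mapped measures on measurable sets
  have eval : ∀ (g : G → ℝ), Integrable g μ → (∀ x, 0 ≤ g x) → ∀ A : Set (G × G),
      MeasurableSet A →
      ((Measure.map (fun x => (x, x⁻¹ * y)) (μ.withDensity fun x => ENNReal.ofReal (g x)))
        A).toReal = ∫ x in (fun x : G => (x, x⁻¹ * y)) ⁻¹' A, g x ∂μ := by
    intro g hg hg0 A hA
    rw [Measure.map_apply hT' hA, withDensity_apply _ (hT' hA),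
      ← ofReal_integral_eq_lintegral_ofReal hg.restrict
        (Filter.Eventually.of_forall hg0),
      ENNReal.toReal_ofReal (integral_nonneg hg0)]
  apply tv_univ_le_aux
  intro A hA
  have hB : MeasurableSet ((fun x : G => (x, x⁻¹ * y)) ⁻¹' A) := hT' hA
  have hpre : (fun x : G => (x, x⁻¹ * y)) ⁻¹' Aᶜ = ((fun x : G => (x, x⁻¹ * y)) ⁻¹' A)ᶜ := rfl
  rw [VectorMeasure.sub_apply, VectorMeasure.sub_apply,
    Measure.toSignedMeasure_apply_measurable hA,
    Measure.toSignedMeasure_apply_measurable hA,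
    Measure.toSignedMeasure_apply_measurable hA.compl,
    Measure.toSignedMeasure_apply_measurable hA.compl,
    measureReal_def, measureReal_def, measureReal_def, measureReal_def,
    eval _ hf₁ (fun x => hf0 _) A hA, eval f hf hf0 A hA,
    eval _ hf₁ (fun x => hf0 _) Aᶜ hA.compl, eval f hf hf0 Aᶜ hA.compl, hpre]
  set B := (fun x : G => (x, x⁻¹ * y)) ⁻¹' A with hBdef
  have i1 : ∫ x in B, (f (y⁻¹ * x) - f x) ∂μ =
      ∫ x in B, f (y⁻¹ * x) ∂μ - ∫ x in B, f x ∂μ := integral_sub hf₁.restrict hf.restrict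
  have i2 : ∫ x in Bᶜ, (f x - f (y⁻¹ * x)) ∂μ =
      ∫ x in Bᶜ, f x ∂μ - ∫ x in Bᶜ, f (y⁻¹ * x) ∂μ := integral_sub hf.restrict hf₁.restrict
  have e1 : ∫ x in B, (f (y⁻¹ * x) - f x) ∂μ ≤ ∫ x in B, |f (y⁻¹ * x) - f x| ∂μ :=
    integral_mono (hf₁.sub hf).restrict hd.restrict fun x => le_abs_self _
  have e2 : ∫ x in Bᶜ, (f x - f (y⁻¹ * x)) ∂μ ≤ ∫ x in Bᶜ, |f (y⁻¹ * x) - f x| ∂μ :=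
    integral_mono (hf.sub hf₁).restrict hd.restrict fun x => by
      rw [abs_sub_comm]; exact le_abs_self _
  have e3 : ∫ x in B, |f (y⁻¹ * x) - f x| ∂μ + ∫ x in Bᶜ, |f (y⁻¹ * x) - f x| ∂μ =
      ∫ x, |f (y⁻¹ * x) - f x| ∂μ := integral_add_compl hB hd
  linarith
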